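/- Let P = 1 − e₃ e₃ᵀ ∈ Matrix (Fin 3) (Fin 3) ℝ be the orthogonal projection onto the plane e₃⊥. For all F, K ∈ Matrix (Fin 3) (Fin 2) ℝ, every special orthogonal R ∈ Matrix (Fin 3) (Fin 3) ℝ with R e₃ = e₃, and every t ∈ ℝ²: (R F)ᵀ (R F) = Fᵀ F, (R F)ᵀ e₃ = Fᵀ e₃, and (R F)ᵀ P (R K + e₃ tᵀ) = Fᵀ P K. Consequently, any strain energy of the form W(F, K) = W̄(Fᵀ F, Fᵀ e₃, Fᵀ P K) is invariant under superposed drilling rotations. (Remark 2 of the paper: the alternative representation W = W̄(FᵀF, Fᵀd₃, Fᵀ(d₃ × Grad_s d₃)) based on the first integral U₅ and Zhilin's bending–twist tensor.) -/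

import Mathlib

/-!
An orthogonal `R` fixing `e₃` also has `Rᵀ e₃ = e₃`, so it commutes with the projection
`P = 1 − e₃e₃ᵀ` and preserves `FᵀF` and `Fᵀe₃`. The drilling term `e₃tᵀ` lies in the kernel
of `P`, so it drops out of `FᵀPK`.
-/

open Matrix

/-- The unit normal `e₃` in the fixed material frame. -/
def e3 : Fin 3 → ℝ := ![0, 0, 1]

/-- The orthogonal projection `P = 1 − e₃e₃ᵀ` onto the plane `e₃⊥`. -/
def projP : Matrix (Fin 3) (Fin 3) ℝ := 1 - vecMulVec e3 e3

namespace Matrix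

variable {α : Type*} [CommRing α] {m n : Type*} [Fintype m]
  {R : Matrix m m α} {v : m → α}

theorem transpose_mul_self_mul_left [DecidableEq m] (hR : Rᵀ * R = 1) (F : Matrix m n α) :
    (R * F)ᵀ * (R * F) = Fᵀ * F := by
  rw [transpose_mul, Matrix.mul_assoc, ← Matrix.mul_assoc Rᵀ, hR, Matrix.one_mul]

theorem transpose_mulVec_eq_self [DecidableEq m] (hR : Rᵀ * R = 1) (hv : R *ᵥ v = v) :
    Rᵀ *ᵥ v = v := by
  conv_lhs => rw [← hv]
  rw [mulVec_mulVec, hR, one_mulVec]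

theorem transpose_mul_mulVec_eq_self (hv : Rᵀ *ᵥ v = v) (F : Matrix m n α) :
    (R * F)ᵀ *ᵥ v = Fᵀ *ᵥ v := by
  rw [transpose_mul, ← mulVec_mulVec, hv]

theorem transpose_mul_vecMulVec_self_mul (hv : Rᵀ *ᵥ v = v) :
    Rᵀ * vecMulVec v v * R = vecMulVec v v := by
  rw [mul_vecMulVec, vecMulVec_mul, hv, ← mulVec_transpose, hv]

theorem transpose_mul_one_sub_vecMulVec_self_mul [DecidableEq m] (hR : Rᵀ * R = 1)
    (hv : Rᵀ *ᵥ v = v) :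
    Rᵀ * (1 - vecMulVec v v) * R = 1 - vecMulVec v v := by
  rw [Matrix.mul_sub, Matrix.sub_mul, Matrix.mul_one, hR, transpose_mul_vecMulVec_self_mul hv]

theorem one_sub_vecMulVec_self_mul_vecMulVec [DecidableEq m] (hv : v ⬝ᵥ v = 1) (t : n → α) :
    (1 - vecMulVec v v) * vecMulVec v t = 0 := by
  rw [Matrix.sub_mul, Matrix.one_mul, vecMulVec_mul_vecMulVec, hv, one_smul, sub_self]

end Matrix

theorem projP_mul_vecMulVec_e3 (t : Fin 2 → ℝ) : projP * vecMulVec e3 t = 0 :=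
  one_sub_vecMulVec_self_mul_vecMulVec (by simp [e3, dotProduct, Fin.sum_univ_three]) t

theorem transpose_mul_mul_projP_mul_drilling {R : Matrix (Fin 3) (Fin 3) ℝ}
    (hR : Rᵀ * R = 1) (hRe3 : R *ᵥ e3 = e3) (F K : Matrix (Fin 3) (Fin 2) ℝ) (t : Fin 2 → ℝ) :
    (R * F)ᵀ * projP * (R * K + vecMulVec e3 t) = Fᵀ * projP * K := by
  have hPR : Rᵀ * projP * R = projP :=
    transpose_mul_one_sub_vecMulVec_self_mul hR (transpose_mulVec_eq_self hR hRe3)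
  rw [Matrix.mul_add, Matrix.mul_assoc (R * F)ᵀ projP (vecMulVec e3 t),
    projP_mul_vecMulVec_e3, Matrix.mul_zero, add_zero]
  calc (R * F)ᵀ * projP * (R * K) = Fᵀ * (Rᵀ * projP * R) * K := by
        simp only [transpose_mul, Matrix.mul_assoc]
    _ = Fᵀ * projP * K := by rw [hPR]

/-- Remark 2: invariance of `FᵀF`, `Fᵀe₃` and `FᵀPK` under superposed
drilling rotations; hence any energy `W(F,K) = W̄(FᵀF, Fᵀe₃, FᵀPK)` is invariant. -/
theorem drilling_invariants_alternative
    (W : Matrix (Fin 3) (Fin 2) ℝ → Matrix (Fin 3) (Fin 2) ℝ → ℝ)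
    (Wbar : Matrix (Fin 2) (Fin 2) ℝ → (Fin 2 → ℝ) → Matrix (Fin 2) (Fin 2) ℝ → ℝ)
    (hW : ∀ F K : Matrix (Fin 3) (Fin 2) ℝ,
      W F K = Wbar (Fᵀ * F) (Fᵀ.mulVec e3) (Fᵀ * projP * K)) :
    ∀ (F K : Matrix (Fin 3) (Fin 2) ℝ) (R : Matrix (Fin 3) (Fin 3) ℝ)
      (t : Fin 2 → ℝ),
      Rᵀ * R = 1 → R.det = 1 → R.mulVec e3 = e3 →
      (R * F)ᵀ * (R * F) = Fᵀ * F ∧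
      (R * F)ᵀ.mulVec e3 = Fᵀ.mulVec e3 ∧
      (R * F)ᵀ * projP * (R * K + vecMulVec e3 t) = Fᵀ * projP * K ∧
      W (R * F) (R * K + vecMulVec e3 t) = W F K := by
  intro F K R t hR _ hRe3
  have hstretch := transpose_mul_self_mul_left hR F
  have hnormal := transpose_mul_mulVec_eq_self (transpose_mulVec_eq_self hR hRe3) F
  have hbend := transpose_mul_mul_projP_mul_drilling hR hRe3 F K t
  exact ⟨hstretch, hnormal, hbend, by rw [hW, hW, hstretch, hnormal, hbend]⟩
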